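/- The ESM GCM does not satisfy Transaction Bundling: there exist a makespan function v satisfying (S1)–(S4), a finite set T, and transactions tx1, tx2 not in T with concatenation tx3 such that gas^ESM_{T∪{tx1,tx2}}(tx1) + gas^ESM_{T∪{tx1,tx2}}(tx2) > gas^ESM_{T∪{tx3}}(tx3). In particular, for T = {tx4} with tx1 ≃ (1,{k1}), tx2 ≃ (1,{k1}), tx3 ≃ (2,{k1}), tx4 ≃ (1,{k1}) and v the optimal-scheduler makespan (so v(T∪{tx1,tx2}) = v(T∪{tx3}) = 3), the left-hand side is 2 while the right-hand side is 3/2. -/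

import Mathlib

/-- The Equally-Split Makespan (ESM) GCM: `gas^ESM_T(tx) = v(T)/|T|`. -/
noncomputable def esmGas {Tx : Type} [DecidableEq Tx]
    (v : Finset Tx → ℝ) (T : Finset Tx) (_tx : Tx) : ℝ :=
  v T / (T.card : ℝ)

/-- Execution times of `tx1 ≃ (1,{k1})`, `tx2 ≃ (1,{k1})`, `tx3 ≃ (2,{k1})`,
`tx4 ≃ (1,{k1})` (indices `0,1,2,3`); `tx3` is the concatenation of `tx1` and
`tx2`. -/
noncomputable def tTx11 : Fin 4 → ℝ := ![1, 1, 2, 1]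

/-- Storage key sets: all transactions use the single key `k1`. -/
def keysTx11 : Fin 4 → Finset (Fin 1) := ![{0}, {0}, {0}, {0}]

/-! Since all transactions access the single key `k1`, no two of them can run in parallel, so
the optimal makespan of a set is its total execution time `∑ tx ∈ T, t tx`. This makespan is
additive, hence satisfies (S1)–(S4), and it gives `v({tx1, tx2, tx4}) = v({tx3, tx4}) = 3`.
Splitting equally, the bundled transaction `tx3` pays `3/2`, whereas `tx1` and `tx2` together
pay `2 · 3/3 = 2`: bundling lowers the charge because it shrinks the set the makespan is
split over. -/

section SumInsert

variable {ι M : Type*} [DecidableEq ι] [AddCommMonoid M] {t : ι → M} {T : Finset ι}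
  {a b c : ι}

theorem sum_insert_insert_eq_sum_insert_of_eq_add (ha : a ∉ T) (hb : b ∉ T) (hc : c ∉ T)
    (hab : a ≠ b) (h : t c = t a + t b) :
    ∑ i ∈ insert a (insert b T), t i = ∑ i ∈ insert c T, t i := by
  rw [Finset.sum_insert (by simp [hab, ha]), Finset.sum_insert hb, Finset.sum_insert hc, h,
    add_assoc]

theorem sum_insert_le_sum_insert [PartialOrder M] [IsOrderedAddMonoid M] (ha : a ∉ T)
    (hb : b ∉ T) (h : t a ≤ t b) :
    ∑ i ∈ insert a T, t i ≤ ∑ i ∈ insert b T, t i := by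
  rw [Finset.sum_insert ha, Finset.sum_insert hb]
  gcongr

end SumInsert

theorem tTx11_nonneg : 0 ≤ tTx11 := by
  intro i
  fin_cases i <;> norm_num [tTx11]

theorem sum_tTx11_unbundled :
    ∑ i ∈ insert 0 (insert 1 ({3} : Finset (Fin 4))), tTx11 i = 3 := by
  simp [tTx11]
  norm_num

theorem sum_tTx11_bundled : ∑ i ∈ insert 2 ({3} : Finset (Fin 4)), tTx11 i = 3 := by
  simp [tTx11]
  norm_num

/-- The ESM GCM does not satisfy Transaction Bundling: there is a
makespan function `v` satisfying (S1)–(S4) (the optimal-scheduler makespan, so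
`v(T∪{tx1,tx2}) = v(T∪{tx3}) = 3`), a set `T = {tx4}`, and transactions
`tx1, tx2 ∉ T` with concatenation `tx3` such that
`gas^ESM_{T∪{tx1,tx2}}(tx1) + gas^ESM_{T∪{tx1,tx2}}(tx2) = 2 > 3/2 = gas^ESM_{T∪{tx3}}(tx3)`. -/
theorem esmGas_not_transaction_bundling :
    ∃ v : Finset (Fin 4) → ℝ,
      -- (S1) monotonicity in T
      (∀ A B : Finset (Fin 4), A ⊆ B → v A ≤ v B) ∧
      -- (S2) monotonicity under bundling
      (∀ (T : Finset (Fin 4)) (a b c : Fin 4), a ∉ T → b ∉ T → c ∉ T → a ≠ b →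
        tTx11 c = tTx11 a + tTx11 b → keysTx11 c = keysTx11 a ∪ keysTx11 b →
        v (insert a (insert b T)) ≤ v (insert c T)) ∧
      -- (S3) monotonicity in t and K
      (∀ (T : Finset (Fin 4)) (a b : Fin 4), a ∉ T → b ∉ T →
        tTx11 a ≤ tTx11 b → keysTx11 a ⊆ keysTx11 b →
        v (insert a T) ≤ v (insert b T)) ∧
      -- (S4) empty set
      v ∅ = 0 ∧
      -- tx3 (= 2) is the concatenation of tx1 (= 0) and tx2 (= 1)
      tTx11 2 = tTx11 0 + tTx11 1 ∧ keysTx11 2 = keysTx11 0 ∪ keysTx11 1 ∧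
      -- makespans
      v (insert 0 (insert 1 ({3} : Finset (Fin 4)))) = 3 ∧
      v (insert 2 ({3} : Finset (Fin 4))) = 3 ∧
      -- the gas values
      esmGas v (insert 0 (insert 1 ({3} : Finset (Fin 4)))) 0
        + esmGas v (insert 0 (insert 1 ({3} : Finset (Fin 4)))) 1 = 2 ∧
      esmGas v (insert 2 ({3} : Finset (Fin 4))) 2 = 3 / 2 ∧
      esmGas v (insert 0 (insert 1 ({3} : Finset (Fin 4)))) 0
          + esmGas v (insert 0 (insert 1 ({3} : Finset (Fin 4)))) 1
        > esmGas v (insert 2 ({3} : Finset (Fin 4))) 2 := by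
  let v : Finset (Fin 4) → ℝ := fun T => ∑ i ∈ T, tTx11 i
  have gas_unbundled (tx : Fin 4) : esmGas v {0, 1, 3} tx = 1 := by
    simp only [esmGas, v, sum_tTx11_unbundled,
      show ({0, 1, 3} : Finset (Fin 4)).card = 3 by decide]
    norm_num
  have gas_bundled : esmGas v {2, 3} 2 = 3 / 2 := by
    simp only [esmGas, v, sum_tTx11_bundled,
      show ({2, 3} : Finset (Fin 4)).card = 2 by decide]
    norm_num
  refine ⟨v, fun _ _ hAB => Finset.sum_mono_set_of_nonneg tTx11_nonneg hAB,
    fun _ _ _ _ ha hb hc hab h _ => (sum_insert_insert_eq_sum_insert_of_eq_add ha hb hc hab h).le,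
    fun _ _ _ ha hb h _ => sum_insert_le_sum_insert ha hb h, Finset.sum_empty,
    by norm_num [tTx11, Matrix.cons_val_two], by decide, sum_tTx11_unbundled, sum_tTx11_bundled,
    ?_, gas_bundled, ?_⟩ <;> norm_num [gas_unbundled, gas_bundled]
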